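/- Let G be a simple graph on n vertices with walk matrix W, let Ḡ be its complement with adjacency matrix Ā, and let G ∨ w be the graph on n+1 vertices obtained from G by adding a new vertex w adjacent to every vertex of G. Then |det(W(G ∨ w))| = |det(Ā)| · |det(W)|. -/

import Mathlib

open Matrix

open scoped Classical in
/-- The 0/1 adjacency matrix of a simple graph, over the integers. -/
noncomputable def adjMat {V : Type*} [Fintype V] (G : SimpleGraph V) : Matrix V V ℤ :=
  Matrix.of fun u v => if G.Adj u v then (1 : ℤ) else 0

/-- The walk matrix of a simple graph on `Fin n`: its `j`-th column is ``A^j e``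
where `e` is the all-ones vector. -/
noncomputable def walkMat {n : ℕ} (G : SimpleGraph (Fin n)) : Matrix (Fin n) (Fin n) ℤ :=
  Matrix.of fun i j => ((adjMat G ^ (j : ℕ)) *ᵥ fun _ => (1 : ℤ)) i

/-- `G ∪ w`: adjoin a new vertex (labelled `0`) adjacent to no vertex of `G`;
the original vertex `i` of `G` becomes `i.succ`. -/
def unionVertex {n : ℕ} (G : SimpleGraph (Fin n)) : SimpleGraph (Fin (n + 1)) where
  Adj u v := ∃ i j : Fin n, u = i.succ ∧ v = j.succ ∧ G.Adj i j
  symm := by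
    constructor
    rintro u v ⟨i, j, hu, hv, h⟩
    exact ⟨j, i, hv, hu, h.symm⟩
  loopless := by
    constructor
    rintro u ⟨i, j, rfl, hv, h⟩
    obtain rfl : i = j := Fin.succ_inj.mp hv
    exact G.loopless.irrefl i h

/-- `G ∨ w`: adjoin a new vertex (labelled `0`) adjacent to every vertex of `G`;
the original vertex `i` of `G` becomes `i.succ`. -/
def joinVertex {n : ℕ} (G : SimpleGraph (Fin n)) : SimpleGraph (Fin (n + 1)) where
  Adj u v := (u = 0 ∧ v ≠ 0) ∨ (v = 0 ∧ u ≠ 0) ∨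
    ∃ i j : Fin n, u = i.succ ∧ v = j.succ ∧ G.Adj i j
  symm := by
    constructor
    rintro u v (⟨h1, h2⟩ | ⟨h1, h2⟩ | ⟨i, j, hu, hv, h⟩)
    · exact Or.inr (Or.inl ⟨h1, h2⟩)
    · exact Or.inl ⟨h1, h2⟩
    · exact Or.inr (Or.inr ⟨j, i, hv, hu, h.symm⟩)
  loopless := by
    constructor
    rintro u (⟨h1, h2⟩ | ⟨h1, h2⟩ | ⟨i, j, rfl, hv, h⟩)
    · exact h2 h1
    · exact h2 h1
    · obtain rfl : i = j := Fin.succ_inj.mp hv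
      exact G.loopless.irrefl i h

/-- The sequence `G₀, G₁, G₂, …` where `Gᵢ = G_{i-1} ∪ wᵢ` for odd `i` and
`Gᵢ = G_{i-1} ∨ wᵢ` for even `i ≥ 2`. -/
def seqGraph {n0 : ℕ} (G0 : SimpleGraph (Fin n0)) : (i : ℕ) → SimpleGraph (Fin (n0 + i))
  | 0 => G0
  | (i + 1) => if (i + 1) % 2 = 1 then unionVertex (seqGraph G0 i) else joinVertex (seqGraph G0 i)

/-- A graph is determined by its generalized spectrum. -/
def IsDGS {n : ℕ} (G : SimpleGraph (Fin n)) : Prop :=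
  ∀ H : SimpleGraph (Fin n),
    (adjMat H).charpoly = (adjMat G).charpoly →
    (adjMat Hᶜ).charpoly = (adjMat Gᶜ).charpoly →
    Nonempty (H ≃g G)

/-!
The complement of `G ∨ w` is `Ḡ` together with an isolated vertex. The walk matrix of a graph
with an isolated vertex has first row `(1, 0, …, 0)` and remaining minor `Ā · W(Ḡ)`, so
`det W(Ḡ ∪ w) = det Ā · det W(Ḡ)`. Complementation changes the determinant of a walk matrix only
by a sign: since `Ā x = (eᵀ x) e - x - A x`, we get `Āʲ e = qⱼ(A) e` for a polynomial `qⱼ` of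
degree `j` with leading coefficient `(-1)ʲ`, so `W(Ḡ) = W(G) U` with `U` upper triangular and
diagonal entries `±1`.
-/

open Polynomial

namespace Matrix

variable {R : Type*} [CommRing R] {n : ℕ}

def krylov (A : Matrix (Fin n) (Fin n) R) (v : Fin n → R) : Matrix (Fin n) (Fin n) R :=
  of fun i j => (A ^ (j : ℕ) *ᵥ v) i

theorem of_aeval_mulVec_eq_krylov_mul (A : Matrix (Fin n) (Fin n) R) (v : Fin n → R)
    (q : Fin n → R[X]) (hq : ∀ j, (q j).natDegree < n) :
    of (fun i j => (aeval A (q j) *ᵥ v) i) =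
      krylov A v * of fun (i j : Fin n) => (q j).coeff i := by
  ext i j
  rw [of_apply, aeval_eq_sum_range' (hq j), sum_mulVec, mul_apply,
    ← Fin.sum_univ_eq_sum_range (fun k => ((q j).coeff k • A ^ k) *ᵥ v)]
  simp [krylov, smul_mulVec, mul_comm]

theorem det_of_coeff_of_natDegree_le (q : Fin n → R[X]) (hq : ∀ j, (q j).natDegree ≤ j) :
    det (of fun (i j : Fin n) => (q j).coeff i) = ∏ j, (q j).coeff j :=
  det_of_isUpperTriangular fun _ j hji =>
    coeff_eq_zero_of_natDegree_lt ((hq j).trans_lt (Fin.lt_def.mp hji))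

theorem det_of_aeval_mulVec (A : Matrix (Fin n) (Fin n) R) (v : Fin n → R)
    (q : Fin n → R[X]) (hq : ∀ j, (q j).natDegree ≤ j) :
    det (of fun i j => (aeval A (q j) *ᵥ v) i) = (∏ j, (q j).coeff j) * det (krylov A v) := by
  rw [of_aeval_mulVec_eq_krylov_mul A v q fun j => (hq j).trans_lt j.isLt, det_mul,
    det_of_coeff_of_natDegree_le q hq, mul_comm]

noncomputable def complKrylovPoly (A : Matrix (Fin n) (Fin n) R) : ℕ → R[X]
  | 0 => 1
  | j + 1 => C (∑ i, (aeval A (complKrylovPoly A j) *ᵥ 1) i) - (X + 1) * complKrylovPoly A j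

theorem natDegree_complKrylovPoly_le (A : Matrix (Fin n) (Fin n) R) (j : ℕ) :
    (complKrylovPoly A j).natDegree ≤ j := by
  induction j with
  | zero => simp [complKrylovPoly]
  | succ j ih =>
    refine (natDegree_sub_le _ _).trans (max_le ((natDegree_C _).trans_le (Nat.zero_le _)) ?_)
    refine natDegree_mul_le.trans ?_
    have : (X + 1 : R[X]).natDegree ≤ 1 := natDegree_add_le_of_degree_le natDegree_X_le (by simp)
    omega

theorem coeff_complKrylovPoly_self (A : Matrix (Fin n) (Fin n) R) (j : ℕ) :
    (complKrylovPoly A j).coeff j = (-1) ^ j := by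
  induction j with
  | zero => simp [complKrylovPoly]
  | succ j ih =>
    have hvanish : (complKrylovPoly A j).coeff (j + 1) = 0 :=
      coeff_eq_zero_of_natDegree_lt ((natDegree_complKrylovPoly_le A j).trans_lt j.lt_succ_self)
    simp [complKrylovPoly, add_mul, coeff_X_mul, ih, hvanish, pow_succ]

theorem allOnes_sub_one_sub_mulVec (A : Matrix (Fin n) (Fin n) R) (x : Fin n → R) :
    (of (fun _ _ => 1) - 1 - A) *ᵥ x = (∑ i, x i) • 1 - x - A *ᵥ x := by
  rw [sub_mulVec, sub_mulVec, one_mulVec]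
  ext i
  simp [mulVec, dotProduct]

theorem complKrylovPoly_mulVec (A : Matrix (Fin n) (Fin n) R) (j : ℕ) :
    (of (fun _ _ => 1) - 1 - A) ^ j *ᵥ 1 = aeval A (complKrylovPoly A j) *ᵥ 1 := by
  induction j with
  | zero => simp [complKrylovPoly]
  | succ j ih =>
    rw [pow_succ', ← mulVec_mulVec, ih, allOnes_sub_one_sub_mulVec]
    simp only [complKrylovPoly, map_sub, map_mul, aeval_C, map_add, aeval_X, map_one,
      Algebra.algebraMap_eq_smul_one, sub_mulVec, smul_mulVec, one_mulVec, ← mulVec_mulVec,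
      add_mulVec]
    abel

theorem det_krylov_compl (A : Matrix (Fin n) (Fin n) R) :
    det (krylov (of (fun _ _ => 1) - 1 - A) 1) = (-1) ^ n.choose 2 * det (krylov A 1) := by
  have hsign : ∏ j : Fin n, (complKrylovPoly A j).coeff j = (-1) ^ n.choose 2 := by
    simp_rw [coeff_complKrylovPoly_self, Finset.prod_pow_eq_pow_sum,
      Fin.sum_univ_eq_sum_range (fun j => j), Finset.sum_range_id, Nat.choose_two_right]
  rw [← hsign, ← det_of_aeval_mulVec _ _ _ fun j => natDegree_complKrylovPoly_le A j]
  congr 1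
  ext i j
  simp [krylov, complKrylovPoly_mulVec]

section IsolatedZero

variable {M : Matrix (Fin (n + 1)) (Fin (n + 1)) R} {A : Matrix (Fin n) (Fin n) R}

theorem mulVec_eq_cons_of_isolated_zero (hrow : ∀ k, M 0 k = 0) (hcol : ∀ k, M k 0 = 0)
    (hsub : ∀ i j, M i.succ j.succ = A i j) (x : Fin (n + 1) → R) :
    M *ᵥ x = Fin.cons 0 (A *ᵥ Fin.tail x) := by
  ext u
  refine Fin.cases ?_ (fun i => ?_) u
  · simp [mulVec, dotProduct, hrow]
  · simp [mulVec, dotProduct, Fin.sum_univ_succ, hcol, hsub, Fin.tail]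

theorem pow_succ_mulVec_eq_cons_of_isolated_zero (hrow : ∀ k, M 0 k = 0)
    (hcol : ∀ k, M k 0 = 0) (hsub : ∀ i j, M i.succ j.succ = A i j)
    (v : Fin (n + 1) → R) (j : ℕ) :
    M ^ (j + 1) *ᵥ v = Fin.cons 0 (A ^ (j + 1) *ᵥ Fin.tail v) := by
  induction j with
  | zero => simp [mulVec_eq_cons_of_isolated_zero hrow hcol hsub]
  | succ j ih =>
    rw [pow_succ', ← mulVec_mulVec, ih, mulVec_eq_cons_of_isolated_zero hrow hcol hsub,
      Fin.tail_cons, mulVec_mulVec, ← pow_succ']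

theorem det_krylov_of_isolated_zero (hrow : ∀ k, M 0 k = 0) (hcol : ∀ k, M k 0 = 0)
    (hsub : ∀ i j, M i.succ j.succ = A i j) (v : Fin (n + 1) → R) :
    det (krylov M v) = v 0 * det A * det (krylov A (Fin.tail v)) := by
  have hpow := pow_succ_mulVec_eq_cons_of_isolated_zero hrow hcol hsub v
  have hminor : (krylov M v).submatrix Fin.succ Fin.succ = A * krylov A (Fin.tail v) := by
    ext i j
    rw [submatrix_apply, krylov, of_apply, Fin.val_succ, hpow, Fin.cons_succ, pow_succ',
      ← mulVec_mulVec]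
    rfl
  rw [det_succ_row_zero, Fin.sum_univ_succ, Finset.sum_eq_zero fun j _ => ?_]
  · rw [add_zero, Fin.succAbove_zero, hminor, det_mul]
    simp [krylov, mul_assoc]
  · simp [krylov, hpow]

end IsolatedZero

end Matrix

theorem adjMat_compl {V : Type*} [Fintype V] [DecidableEq V] (G : SimpleGraph V) :
    adjMat Gᶜ = of (fun _ _ => 1) - 1 - adjMat G := by
  ext u v
  by_cases huv : u = v
  · subst huv
    simp [adjMat]
  · by_cases h : G.Adj u v <;> simp [adjMat, huv, h]

theorem walkMat_eq_krylov {n : ℕ} (G : SimpleGraph (Fin n)) :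
    walkMat G = krylov (adjMat G) 1 :=
  rfl

theorem det_walkMat_compl {n : ℕ} (G : SimpleGraph (Fin n)) :
    (walkMat Gᶜ).det = (-1) ^ n.choose 2 * (walkMat G).det := by
  rw [walkMat_eq_krylov, walkMat_eq_krylov, adjMat_compl, det_krylov_compl]

theorem abs_det_walkMat_compl {n : ℕ} (G : SimpleGraph (Fin n)) :
    |(walkMat Gᶜ).det| = |(walkMat G).det| := by
  rw [det_walkMat_compl, abs_mul, abs_neg_one_pow, one_mul]

theorem compl_joinVertex {n : ℕ} (G : SimpleGraph (Fin n)) :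
    (joinVertex G)ᶜ = unionVertex Gᶜ := by
  ext u v
  refine Fin.cases ?_ (fun i => ?_) u <;> refine Fin.cases ?_ (fun j => ?_) v <;>
    simp [joinVertex, unionVertex, eq_comm (a := (0 : Fin (n + 1)))]

theorem unionVertex_adj_succ {n : ℕ} (G : SimpleGraph (Fin n)) (i j : Fin n) :
    (unionVertex G).Adj i.succ j.succ ↔ G.Adj i j := by
  simp [unionVertex]

theorem det_walkMat_unionVertex {n : ℕ} (G : SimpleGraph (Fin n)) :
    (walkMat (unionVertex G)).det = (adjMat G).det * (walkMat G).det := by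
  rw [walkMat_eq_krylov, walkMat_eq_krylov,
    det_krylov_of_isolated_zero (A := adjMat G) ?_ ?_ ?_, Pi.one_apply, one_mul]
  · rfl
  · exact fun _ => if_neg fun ⟨i, _, h, _⟩ => Fin.succ_ne_zero i h.symm
  · exact fun _ => if_neg fun ⟨_, j, _, h, _⟩ => Fin.succ_ne_zero j h.symm
  · classical exact fun i j => if_congr (unionVertex_adj_succ G i j) rfl rfl

/-- |det(W(G ∨ w))| = |det(Ā)| · |det(W)|. -/
theorem abs_det_walkMat_joinVertex {n : ℕ} (G : SimpleGraph (Fin n)) :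
    |(walkMat (joinVertex G)).det| = |(adjMat Gᶜ).det| * |(walkMat G).det| := by
  rw [← abs_det_walkMat_compl (joinVertex G), compl_joinVertex, det_walkMat_unionVertex, abs_mul,
    abs_det_walkMat_compl]
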